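/- Theorem 2.1(d). Fix t ∈ ℝ. Suppose x ∈ 𝓑_{ε1,ε2}, the separation condition σ(t) ≥ 2α/(φ'_k(t) − φ'_{k−1}(t)) holds for all t and k = 1,…,K, and 2M(t)(τ0 + λ_0(t)) ≤ μ(t). Let ε̃1 satisfy M(t)(τ0 + λ_0(t)) ≤ ε̃1 ≤ μ(t) − M(t)(τ0 + λ_0(t)); let η̂_0 = 0 and η̂_ℓ(t) = argmax_{η ∈ 𝓖_{t,ℓ}} |Ṽ_x(t,η)| for 1 ≤ ℓ ≤ K. If in addition g(τ) ≥ 0 for all τ ∈ ℝ, then for each ℓ = 0,1,…,K, | |Ṽ_x(t, η̂_ℓ)| − A_ℓ(t) | ≤ err_ℓ(t). -/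

import Mathlib

open MeasureTheory Real

noncomputable section

/-- The adaptive short-time Fourier transform with time-varying window width `σ`. -/
def aSTFT (x : ℝ → ℂ) (g : ℝ → ℝ) (σ : ℝ → ℝ) (t η : ℝ) : ℂ :=
  ∫ τ : ℝ, x (t + τ) * (((σ t)⁻¹ * g (τ / σ t) : ℝ) : ℂ) *
    Complex.exp (-(2 * (π : ℂ) * η * τ) * Complex.I)

/-- The Fourier transform `ĝ` of the window `g`. -/
def hatg (g : ℝ → ℝ) (ξ : ℝ) : ℂ :=
  ∫ τ : ℝ, (g τ : ℂ) * Complex.exp (-(2 * (π : ℂ) * ξ * τ) * Complex.I)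

/-- The absolute moments `I_n = ∫ |τ^n g(τ)| dτ` of the window. -/
def momentI (g : ℝ → ℝ) (n : ℕ) : ℝ := ∫ τ : ℝ, |τ| ^ n * |g τ|

/-- The `k`-th component `x_k(s) = A_k(s) e^{2πi φ_k(s)}`. -/
def xcomp (A φ : ℕ → ℝ → ℝ) (k : ℕ) (s : ℝ) : ℂ :=
  (A k s : ℂ) * Complex.exp ((2 * (π : ℂ) * φ k s) * Complex.I)

/-- `M(t) = Σ_{k=0}^K A_k(t)`. -/
def Msum (K : ℕ) (A : ℕ → ℝ → ℝ) (t : ℝ) : ℝ := ∑ k ∈ Finset.range (K + 1), A k t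

/-- `μ(t) = min_{0 ≤ k ≤ K} A_k(t)`. -/
def muMin (K : ℕ) (A : ℕ → ℝ → ℝ) (t : ℝ) : ℝ :=
  (Finset.range (K + 1)).inf' (by simp) fun k => A k t

/-- `λ_0(t) = ε1 I_1 σ(t) + π ε2 I_2 σ(t)²`. -/
def lam0 (g : ℝ → ℝ) (σ : ℝ → ℝ) (ε1 ε2 t : ℝ) : ℝ :=
  ε1 * momentI g 1 * σ t + π * ε2 * momentI g 2 * σ t ^ 2

/-- `err_ℓ(t) = M(t)λ_0(t) + Σ_{k≠ℓ} A_k(t) |ĝ(α(2|ℓ−k|−1))|`. -/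
def errl (K : ℕ) (A : ℕ → ℝ → ℝ) (g : ℝ → ℝ) (σ : ℝ → ℝ) (α ε1 ε2 : ℝ)
    (l : ℕ) (t : ℝ) : ℝ :=
  Msum K A t * lam0 g σ ε1 ε2 t +
    ∑ k ∈ (Finset.range (K + 1)).erase l,
      A k t * ‖hatg g (α * (2 * |(l : ℝ) - (k : ℝ)| - 1))‖

/-- `𝓖_t = {η : |Ṽ_x(t,η)| > ε̃1}`. -/
def Gt (x : ℝ → ℂ) (g : ℝ → ℝ) (σ : ℝ → ℝ) (t eps : ℝ) : Set ℝ :=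
  {η | eps < ‖aSTFT x g σ t η‖}

/-- `𝓖_{t,k} = {η ∈ 𝓖_t : |η − φ'_k(t)| < α/σ(t)}`. -/
def Gtk (x : ℝ → ℂ) (g : ℝ → ℝ) (σ : ℝ → ℝ) (φ : ℕ → ℝ → ℝ) (α t eps : ℝ)
    (k : ℕ) : Set ℝ :=
  {η | η ∈ Gt x g σ t eps ∧ |η - deriv (φ k) t| < α / σ t}


/-!
The STFT of each component is close to the pure tone `x_k(t) ĝ(σ(t)(η − φ'_k(t)))`: freezing the
amplitude at `t` costs `ε1 I_1 σ(t) A_k(t)` and linearising the phase (second-order Taylor) costs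
`π ε2 I_2 σ(t)² A_k(t)`. The separation condition puts `φ'_k(t)` at distance at least
`2α|ℓ−k|/σ(t)` from `φ'_ℓ(t)`, so for `η` within `α/σ(t)` of `φ'_ℓ(t)` the other tones are at most
`A_k(t) |ĝ(α(2|ℓ−k|−1))|`, as `|ĝ|` decreases. Hence `|Ṽ_x(t,η)| ≤ A_ℓ(t) + err_ℓ(t)` near
`φ'_ℓ(t)` and `|Ṽ_x(t,φ'_ℓ(t))| ≥ A_ℓ(t) − err_ℓ(t)`. The threshold condition puts `φ'_ℓ(t)` in
`𝓖_{t,ℓ}`, so the maximiser `η̂_ℓ` satisfies both bounds.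
-/

lemma norm_cexp_ofReal_mul_I_sub_le (a b : ℝ) :
    ‖Complex.exp (a * Complex.I) - Complex.exp (b * Complex.I)‖ ≤ |a - b| := by
  have h := Real.norm_exp_I_mul_ofReal_sub_one_le (x := a - b)
  rw [Real.norm_eq_abs] at h
  calc ‖Complex.exp (a * Complex.I) - Complex.exp (b * Complex.I)‖
      = ‖Complex.exp (b * Complex.I)‖ * ‖Complex.exp (Complex.I * (a - b : ℝ)) - 1‖ := by
        rw [← norm_mul, mul_sub, mul_one, ← Complex.exp_add]
        push_cast
        ring_nf
    _ ≤ |a - b| := by rw [Complex.norm_exp_ofReal_mul_I, one_mul]; exact h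

lemma abs_sub_sub_deriv_mul_le {f : ℝ → ℝ} (hf : ContDiff ℝ 2 f) {C : ℝ}
    (hC : ∀ s, |deriv (deriv f) s| ≤ C) (t τ : ℝ) :
    |f (t + τ) - f t - deriv f t * τ| ≤ C * τ ^ 2 / 2 := by
  rcases eq_or_ne τ 0 with rfl | hτ
  · simp
  have ht : t ≠ t + τ := by simpa using hτ
  obtain ⟨s, -, hs⟩ := taylor_mean_remainder_lagrange_iteratedDeriv (n := 1) ht hf.contDiffOn
  have hderiv : derivWithin f (Set.uIcc t (t + τ)) t = deriv f t :=
    (hf.differentiable (by norm_num)).differentiableAt.derivWithin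
      ((uniqueDiffOn_uIcc ht) t Set.left_mem_uIcc)
  simp only [taylorWithinEval_succ, taylor_within_zero_eval, zero_add, iteratedDerivWithin_one,
    hderiv, iteratedDeriv_succ, add_sub_cancel_left] at hs
  norm_num at hs
  rw [show f (t + τ) - f t - deriv f t * τ = deriv (deriv f) s * τ ^ 2 / 2 by rw [← hs]; ring,
    abs_div, abs_mul, abs_of_nonneg (sq_nonneg τ), abs_two]
  gcongr
  exact hC s

section Window

variable {g : ℝ → ℝ}

lemma hatg_zero (hg : ∫ τ, g τ = 1) : hatg g 0 = 1 := by
  simp [hatg, integral_complex_ofReal, hg]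

lemma norm_hatg_le_of_le_abs (hgeven : ∀ ξ, ‖hatg g (-ξ)‖ = ‖hatg g ξ‖)
    (hgdec : ∀ ξ1 ξ2, 0 ≤ ξ1 → ξ1 ≤ ξ2 → ‖hatg g ξ2‖ ≤ ‖hatg g ξ1‖)
    {c ξ : ℝ} (hc : 0 ≤ c) (hcξ : c ≤ |ξ|) : ‖hatg g ξ‖ ≤ ‖hatg g c‖ := by
  rcases abs_choice ξ with h | h
  · exact h ▸ hgdec c |ξ| hc hcξ
  · rw [← hgeven, ← h]; exact hgdec c |ξ| hc hcξ

lemma norm_hatg_le_one (hg : ∫ τ, g τ = 1) (hgeven : ∀ ξ, ‖hatg g (-ξ)‖ = ‖hatg g ξ‖)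
    (hgdec : ∀ ξ1 ξ2, 0 ≤ ξ1 → ξ1 ≤ ξ2 → ‖hatg g ξ2‖ ≤ ‖hatg g ξ1‖) (ξ : ℝ) :
    ‖hatg g ξ‖ ≤ 1 := by
  simpa [hatg_zero hg] using norm_hatg_le_of_le_abs hgeven hgdec le_rfl (abs_nonneg ξ)

lemma norm_hatg_le_of_abs_le (hgeven : ∀ ξ, ‖hatg g (-ξ)‖ = ‖hatg g ξ‖)
    (hgdec : ∀ ξ1 ξ2, 0 ≤ ξ1 → ξ1 ≤ ξ2 → ‖hatg g ξ2‖ ≤ ‖hatg g ξ1‖)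
    {α n u v : ℝ} (hα : 0 ≤ α) (hn : 1 ≤ n) (hu : |u| ≤ α) (huv : 2 * α * n ≤ |v - u|) :
    ‖hatg g v‖ ≤ ‖hatg g (α * (2 * n - 1))‖ :=
  norm_hatg_le_of_le_abs hgeven hgdec (by nlinarith) (by linarith [abs_sub v u])

end Window

section ScaledWindow

variable {g : ℝ → ℝ} {c : ℝ}

lemma integral_scaled_window_mul_cexp (hc : 0 < c) (ξ : ℝ) :
    ∫ τ : ℝ, ((c⁻¹ * g (τ / c) : ℝ) : ℂ) * Complex.exp (-(2 * (π : ℂ) * ξ * τ) * Complex.I)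
      = hatg g (c * ξ) := by
  let F : ℝ → ℂ := fun u => (g u : ℂ) * Complex.exp (-(2 * (π : ℂ) * (c * ξ : ℝ) * u) * Complex.I)
  have hF : ∀ τ : ℝ, ((c⁻¹ * g (τ / c) : ℝ) : ℂ) *
      Complex.exp (-(2 * (π : ℂ) * ξ * τ) * Complex.I) = (c⁻¹ : ℝ) • F (τ / c) := by
    intro τ
    have hc' : (c : ℂ) ≠ 0 := by exact_mod_cast hc.ne'
    simp only [F, Complex.real_smul]
    push_cast
    rw [show 2 * (π : ℂ) * (c * ξ) * (τ / c) = 2 * π * ξ * τ by field_simp]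
    ring
  simp_rw [hF]
  rw [integral_smul, Measure.integral_comp_div F c, abs_of_pos hc, smul_smul,
    inv_mul_cancel₀ hc.ne', one_smul]
  rfl

lemma integrable_abs_pow_mul_scaled_window {n : ℕ} (hg : Integrable fun τ => τ ^ n * g τ)
    (hc : 0 < c) : Integrable fun τ => |τ| ^ n * (c⁻¹ * |g (τ / c)|) := by
  refine ((hg.abs.comp_div hc.ne').const_mul (c⁻¹ * c ^ n)).congr
    (Filter.Eventually.of_forall fun τ => ?_)
  simp only [abs_mul, abs_pow, abs_div, abs_of_pos hc, div_pow]
  field_simp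

lemma integral_abs_pow_mul_scaled_window (hc : 0 < c) (n : ℕ) :
    ∫ τ, |τ| ^ n * (c⁻¹ * |g (τ / c)|) = c ^ n * momentI g n := by
  have h : ∀ τ, |τ| ^ n * (c⁻¹ * |g (τ / c)|)
      = c⁻¹ * ((c ^ n) * (|τ / c| ^ n * |g (τ / c)|)) := by
    intro τ
    rw [abs_div, abs_of_pos hc, div_pow]
    field_simp
  simp_rw [h]
  rw [integral_const_mul, integral_const_mul,
    Measure.integral_comp_div (fun u => |u| ^ n * |g u|) c, abs_of_pos hc, smul_eq_mul, momentI]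
  field_simp

lemma integrable_mul_scaled_window_mul_cexp {f : ℝ → ℂ} (hf : Continuous f) {C : ℝ}
    (hfC : ∀ τ, ‖f τ‖ ≤ C) (hg : Integrable g) (hc : 0 < c) (η : ℝ) :
    Integrable fun τ : ℝ => f τ * ((c⁻¹ * g (τ / c) : ℝ) : ℂ) *
      Complex.exp (-(2 * (π : ℂ) * η * τ) * Complex.I) := by
  have hw : Integrable fun τ : ℝ => ((c⁻¹ * g (τ / c) : ℝ) : ℂ) :=
    ((hg.comp_div hc.ne').const_mul c⁻¹).ofReal
  refine (hw.bdd_mul hf.aestronglyMeasurable (Filter.Eventually.of_forall hfC)).mul_bdd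
    (c := 1) (by fun_prop) (Filter.Eventually.of_forall fun τ => ?_)
  simp [Complex.norm_exp]

end ScaledWindow

section Separation

variable {K : ℕ} {f : ℕ → ℝ} {c : ℝ}

lemma mul_sub_le_sub_of_le_sub_pred (h : ∀ k, 1 ≤ k → k ≤ K → c ≤ f k - f (k - 1))
    {m n : ℕ} (hmn : m ≤ n) (hn : n ≤ K) : c * ((n : ℝ) - m) ≤ f n - f m := by
  induction n, hmn using Nat.le_induction with
  | base => simp
  | succ n hmn ih =>
    have hstep := h (n + 1) (by omega) hn
    rw [Nat.add_sub_cancel] at hstep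
    push_cast
    linarith [ih (by omega)]

lemma mul_abs_sub_le_abs_sub_of_le_sub_pred (h : ∀ k, 1 ≤ k → k ≤ K → c ≤ f k - f (k - 1))
    {k l : ℕ} (hk : k ≤ K) (hl : l ≤ K) : c * |(l : ℝ) - k| ≤ |f l - f k| := by
  rcases le_total k l with hkl | hlk
  · rw [abs_of_nonneg (by simpa using hkl)]
    exact (mul_sub_le_sub_of_le_sub_pred h hkl hl).trans (le_abs_self _)
  · rw [abs_sub_comm, abs_sub_comm (f l), abs_of_nonneg (by simpa using hlk)]
    exact (mul_sub_le_sub_of_le_sub_pred h hlk hk).trans (le_abs_self _)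

lemma two_mul_abs_sub_le_of_sep {α : ℝ}
    (hinc : ∀ k, 1 ≤ k → k ≤ K → 0 < f k - f (k - 1))
    (hsep : ∀ k, 1 ≤ k → k ≤ K → 2 * α / (f k - f (k - 1)) ≤ c) {k l : ℕ} (hk : k ≤ K)
    (hl : l ≤ K) : 2 * α * |(l : ℝ) - k| ≤ |c * f l - c * f k| := by
  refine mul_abs_sub_le_abs_sub_of_le_sub_pred (f := fun k => c * f k) (fun j hj1 hjK => ?_) hk hl
  rw [← mul_sub, ← div_le_iff₀ (hinc j hj1 hjK)]
  exact hsep j hj1 hjK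

end Separation

lemma one_le_abs_natCast_sub {k l : ℕ} (h : k ≠ l) : (1 : ℝ) ≤ |(l : ℝ) - k| := by
  have : (l : ℤ) - k ≠ 0 := by omega
  exact_mod_cast Int.one_le_abs this

section SumApprox

variable {ι E : Type*} [SeminormedAddCommGroup E] [DecidableEq ι] {S : Finset ι} {l : ι}
  {V : E} {G : ι → E} {a ε : ℝ} {b : ι → ℝ}

lemma norm_le_of_norm_sub_sum_le (hl : l ∈ S) (hV : ‖V - ∑ k ∈ S, G k‖ ≤ ε)
    (hGl : ‖G l‖ ≤ a) (hG : ∀ k ∈ S.erase l, ‖G k‖ ≤ b k) :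
    ‖V‖ ≤ a + (ε + ∑ k ∈ S.erase l, b k) := by
  have hsum : ‖∑ k ∈ S, G k‖ ≤ a + ∑ k ∈ S.erase l, b k := by
    rw [← Finset.add_sum_erase _ _ hl]
    exact (norm_add_le _ _).trans
      (add_le_add hGl ((norm_sum_le _ _).trans (Finset.sum_le_sum hG)))
  linarith [norm_le_norm_add_norm_sub' V (∑ k ∈ S, G k)]

lemma le_norm_of_norm_sub_sum_le (hl : l ∈ S) (hV : ‖V - ∑ k ∈ S, G k‖ ≤ ε)
    (hGl : a ≤ ‖G l‖) (hG : ∀ k ∈ S.erase l, ‖G k‖ ≤ b k) :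
    a - (ε + ∑ k ∈ S.erase l, b k) ≤ ‖V‖ := by
  have hsum : a - ∑ k ∈ S.erase l, b k ≤ ‖∑ k ∈ S, G k‖ := by
    rw [← Finset.add_sum_erase _ _ hl]
    linarith [norm_sub_le_norm_add (G l) (∑ k ∈ S.erase l, G k),
      (norm_sum_le (S.erase l) G).trans (Finset.sum_le_sum hG)]
  linarith [norm_le_norm_add_norm_sub V (∑ k ∈ S, G k)]

end SumApprox

lemma aSTFT_finset_sum {ι : Type*} (S : Finset ι) {x : ι → ℝ → ℂ} {g σ : ℝ → ℝ} {t : ℝ}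
    (hx : ∀ i ∈ S, Continuous (x i)) (hxb : ∀ i ∈ S, ∃ C, ∀ s, ‖x i s‖ ≤ C)
    (hg : Integrable g) (hσ : 0 < σ t) (η : ℝ) :
    aSTFT (fun s => ∑ i ∈ S, x i s) g σ t η = ∑ i ∈ S, aSTFT (x i) g σ t η := by
  unfold aSTFT
  rw [← integral_finsetSum]
  · simp_rw [Finset.sum_mul]
  · intro i hi
    obtain ⟨C, hC⟩ := hxb i hi
    exact integrable_mul_scaled_window_mul_cexp ((hx i hi).comp (continuous_const_add t))
      (fun τ => hC _) hg hσ η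

section Component

variable {A φ : ℕ → ℝ → ℝ} {k : ℕ}

lemma norm_xcomp (A φ : ℕ → ℝ → ℝ) (k : ℕ) (s : ℝ) : ‖xcomp A φ k s‖ = |A k s| := by
  simp [xcomp, Complex.norm_exp]

lemma continuous_xcomp (hA : Continuous (A k)) (hφ : Continuous (φ k)) :
    Continuous (xcomp A φ k) := by
  unfold xcomp
  fun_prop

lemma norm_xcomp_add_sub_le {ε1 ε2 t : ℝ} (hA : 0 ≤ A k t)
    (hAlip : ∀ τ, |A k (t + τ) - A k t| ≤ ε1 * |τ| * A k t)
    (hφ : ContDiff ℝ 2 (φ k)) (hφ'' : ∀ s, |deriv (deriv (φ k)) s| ≤ ε2) (τ : ℝ) :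
    ‖xcomp A φ k (t + τ) - xcomp A φ k t * Complex.exp (2 * π * deriv (φ k) t * τ * Complex.I)‖
      ≤ A k t * (ε1 * |τ| + π * ε2 * τ ^ 2) := by
  set p : ℝ := 2 * π * φ k (t + τ)
  set q : ℝ := 2 * π * (φ k t + deriv (φ k) t * τ)
  have hsplit : xcomp A φ k (t + τ) - xcomp A φ k t *
        Complex.exp (2 * π * deriv (φ k) t * τ * Complex.I)
      = ((A k (t + τ) - A k t : ℝ) : ℂ) * Complex.exp (p * Complex.I)
        + (A k t : ℂ) * (Complex.exp (p * Complex.I) - Complex.exp (q * Complex.I)) := by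
    simp only [xcomp, p, q, mul_sub, mul_assoc, ← Complex.exp_add]
    push_cast
    ring_nf
  have hphase : |p - q| ≤ 2 * π * (ε2 * τ ^ 2 / 2) := by
    rw [show p - q = 2 * π * (φ k (t + τ) - φ k t - deriv (φ k) t * τ) by ring, abs_mul,
      abs_of_pos (by positivity)]
    gcongr
    exact abs_sub_sub_deriv_mul_le hφ hφ'' t τ
  calc _ ≤ |A k (t + τ) - A k t| + A k t * |p - q| := by
        rw [hsplit]
        refine (norm_add_le _ _).trans ?_
        rw [norm_mul, norm_mul, Complex.norm_exp_ofReal_mul_I, Complex.norm_real,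
          Complex.norm_real, Real.norm_eq_abs, Real.norm_eq_abs, abs_of_nonneg hA, mul_one]
        gcongr
        exact norm_cexp_ofReal_mul_I_sub_le p q
    _ ≤ ε1 * |τ| * A k t + A k t * (2 * π * (ε2 * τ ^ 2 / 2)) := by
        gcongr
        exact hAlip τ
    _ = A k t * (ε1 * |τ| + π * ε2 * τ ^ 2) := by ring

end Component

def toneSTFT (A φ : ℕ → ℝ → ℝ) (g σ : ℝ → ℝ) (k : ℕ) (t η : ℝ) : ℂ :=
  xcomp A φ k t * hatg g (σ t * (η - deriv (φ k) t))

section Tone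

variable {A φ : ℕ → ℝ → ℝ} {g σ : ℝ → ℝ} {k : ℕ} {t : ℝ}

lemma norm_toneSTFT (hA : 0 ≤ A k t) (η : ℝ) :
    ‖toneSTFT A φ g σ k t η‖ = A k t * ‖hatg g (σ t * (η - deriv (φ k) t))‖ := by
  rw [toneSTFT, norm_mul, norm_xcomp, abs_of_nonneg hA]

lemma norm_toneSTFT_le (hA : 0 ≤ A k t) (hg : ∫ τ, g τ = 1)
    (hgeven : ∀ ξ, ‖hatg g (-ξ)‖ = ‖hatg g ξ‖)
    (hgdec : ∀ ξ1 ξ2, 0 ≤ ξ1 → ξ1 ≤ ξ2 → ‖hatg g ξ2‖ ≤ ‖hatg g ξ1‖) (η : ℝ) :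
    ‖toneSTFT A φ g σ k t η‖ ≤ A k t := by
  rw [norm_toneSTFT hA]
  exact mul_le_of_le_one_right hA (norm_hatg_le_one hg hgeven hgdec _)

lemma norm_toneSTFT_deriv (hA : 0 ≤ A k t) (hg : ∫ τ, g τ = 1) :
    ‖toneSTFT A φ g σ k t (deriv (φ k) t)‖ = A k t := by
  rw [norm_toneSTFT hA, sub_self, mul_zero, hatg_zero hg, norm_one, mul_one]

/-- `toneSTFT` is the STFT of the component with its amplitude frozen and its phase linearised
at `t`. -/
lemma toneSTFT_eq_integral (hσ : 0 < σ t) (η : ℝ) :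
    toneSTFT A φ g σ k t η = ∫ τ : ℝ,
      xcomp A φ k t * Complex.exp (2 * π * deriv (φ k) t * τ * Complex.I) *
        (((σ t)⁻¹ * g (τ / σ t) : ℝ) : ℂ) * Complex.exp (-(2 * (π : ℂ) * η * τ) * Complex.I) := by
  rw [toneSTFT, ← integral_scaled_window_mul_cexp hσ, ← integral_const_mul]
  congr 1 with τ
  rw [show -(2 * (π : ℂ) * ((η - deriv (φ k) t : ℝ) : ℂ) * τ) * Complex.I
      = 2 * π * deriv (φ k) t * τ * Complex.I + -(2 * (π : ℂ) * η * τ) * Complex.I by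
    push_cast; ring, Complex.exp_add]
  ring

lemma norm_aSTFT_xcomp_sub_toneSTFT_le {ε1 ε2 : ℝ} (hA : Continuous (A k)) {C : ℝ}
    (hAC : ∀ s, |A k s| ≤ C) (hAt : 0 ≤ A k t)
    (hAlip : ∀ τ, |A k (t + τ) - A k t| ≤ ε1 * |τ| * A k t)
    (hφ : ContDiff ℝ 2 (φ k)) (hφ'' : ∀ s, |deriv (deriv (φ k)) s| ≤ ε2)
    (hg : Integrable g) (hgI1 : Integrable fun τ => τ * g τ)
    (hgI2 : Integrable fun τ => τ ^ 2 * g τ) (hσ : 0 < σ t) (η : ℝ) :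
    ‖aSTFT (xcomp A φ k) g σ t η - toneSTFT A φ g σ k t η‖ ≤ A k t * lam0 g σ ε1 ε2 t := by
  set wc : ℝ → ℂ := fun τ => (((σ t)⁻¹ * g (τ / σ t) : ℝ) : ℂ)
  set e : ℝ → ℂ := fun τ => Complex.exp (-(2 * (π : ℂ) * η * τ) * Complex.I)
  set model : ℝ → ℂ := fun τ =>
    xcomp A φ k t * Complex.exp (2 * π * deriv (φ k) t * τ * Complex.I)
  set w : ℝ → ℝ := fun τ => (σ t)⁻¹ * |g (τ / σ t)|
  have hsignal : Integrable fun τ => xcomp A φ k (t + τ) * wc τ * e τ :=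
    integrable_mul_scaled_window_mul_cexp (continuous_xcomp hA hφ.continuous |>.comp
      (continuous_const_add t)) (fun τ => (norm_xcomp A φ k _).trans_le (hAC _)) hg hσ η
  have hmodel : Integrable fun τ => model τ * wc τ * e τ :=
    integrable_mul_scaled_window_mul_cexp (by fun_prop) (C := |A k t|)
      (fun τ => by simp [model, norm_xcomp, Complex.norm_exp]) hg hσ η
  have hw1 := integrable_abs_pow_mul_scaled_window (n := 1) (by simpa using hgI1) hσ
  have hw2 := integrable_abs_pow_mul_scaled_window (n := 2) hgI2 hσ
  have hbound : ∀ τ, ‖(xcomp A φ k (t + τ) - model τ) * wc τ * e τ‖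
      ≤ A k t * (ε1 * (|τ| ^ 1 * w τ) + π * ε2 * (|τ| ^ 2 * w τ)) := by
    intro τ
    have he : ‖e τ‖ = 1 := by simp [e, Complex.norm_exp]
    rw [norm_mul, norm_mul, he, mul_one, Complex.norm_real, Real.norm_eq_abs, abs_mul, abs_inv,
      abs_of_pos hσ, pow_one, sq_abs]
    calc _ ≤ A k t * (ε1 * |τ| + π * ε2 * τ ^ 2) * w τ := by
          gcongr
          exact norm_xcomp_add_sub_le hAt hAlip hφ hφ'' τ
      _ = _ := by ring
  calc _ = ‖(∫ τ, xcomp A φ k (t + τ) * wc τ * e τ) - ∫ τ, model τ * wc τ * e τ‖ := by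
        rw [toneSTFT_eq_integral hσ]
        rfl
    _ = ‖∫ τ, (xcomp A φ k (t + τ) - model τ) * wc τ * e τ‖ := by
        rw [← integral_sub hsignal hmodel]
        simp_rw [sub_mul]
    _ ≤ ∫ τ, A k t * (ε1 * (|τ| ^ 1 * w τ) + π * ε2 * (|τ| ^ 2 * w τ)) :=
        norm_integral_le_of_norm_le ((hw1.const_mul _).add (hw2.const_mul _) |>.const_mul _)
          (Filter.Eventually.of_forall hbound)
    _ = A k t * lam0 g σ ε1 ε2 t := by
        rw [integral_const_mul, integral_add (hw1.const_mul _) (hw2.const_mul _),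
          integral_const_mul, integral_const_mul, integral_abs_pow_mul_scaled_window hσ,
          integral_abs_pow_mul_scaled_window hσ, lam0]
        ring

end Tone

lemma norm_aSTFT_sub_sum_toneSTFT_le {K : ℕ} {A φ : ℕ → ℝ → ℝ} {x : ℝ → ℂ} {g σ : ℝ → ℝ}
    {ε1 ε2 t : ℝ} (hx : ∀ s, x s = ∑ k ∈ Finset.range (K + 1), xcomp A φ k s)
    (hA : ∀ k ≤ K, Continuous (A k)) (hAbdd : ∀ k ≤ K, ∃ C, ∀ s, |A k s| ≤ C)
    (hAt : ∀ k ≤ K, 0 ≤ A k t) (hAlip : ∀ k ≤ K, ∀ τ, |A k (t + τ) - A k t| ≤ ε1 * |τ| * A k t)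
    (hφ : ∀ k ≤ K, ContDiff ℝ 2 (φ k)) (hφ'' : ∀ k ≤ K, ∀ s, |deriv (deriv (φ k)) s| ≤ ε2)
    (hg : Integrable g) (hgI1 : Integrable fun τ => τ * g τ)
    (hgI2 : Integrable fun τ => τ ^ 2 * g τ) (hσ : 0 < σ t) (η : ℝ) :
    ‖aSTFT x g σ t η - ∑ k ∈ Finset.range (K + 1), toneSTFT A φ g σ k t η‖
      ≤ Msum K A t * lam0 g σ ε1 ε2 t := by
  have hK : ∀ k ∈ Finset.range (K + 1), k ≤ K := fun k => Finset.mem_range_succ_iff.mp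
  have hxbdd : ∀ k ∈ Finset.range (K + 1), ∃ C, ∀ s, ‖xcomp A φ k s‖ ≤ C := fun k hk => by
    obtain ⟨C, hC⟩ := hAbdd k (hK k hk)
    exact ⟨C, fun s => (norm_xcomp A φ k s).trans_le (hC s)⟩
  rw [show x = fun s => ∑ k ∈ Finset.range (K + 1), xcomp A φ k s from funext hx,
    aSTFT_finset_sum _ (fun k hk => continuous_xcomp (hA k (hK k hk)) (hφ k (hK k hk)).continuous)
      hxbdd hg hσ η, ← Finset.sum_sub_distrib, Msum, Finset.sum_mul]
  refine (norm_sum_le _ _).trans (Finset.sum_le_sum fun k hk => ?_)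
  obtain ⟨C, hC⟩ := hAbdd k (hK k hk)
  exact norm_aSTFT_xcomp_sub_toneSTFT_le (hA k (hK k hk)) hC (hAt k (hK k hk))
    (hAlip k (hK k hk)) (hφ k (hK k hk)) (hφ'' k (hK k hk)) hg hgI1 hgI2 hσ η

lemma norm_toneSTFT_le_of_ne {A φ : ℕ → ℝ → ℝ} {g σ : ℝ → ℝ} {α t η : ℝ} {k l : ℕ}
    (hgeven : ∀ ξ, ‖hatg g (-ξ)‖ = ‖hatg g ξ‖)
    (hgdec : ∀ ξ1 ξ2, 0 ≤ ξ1 → ξ1 ≤ ξ2 → ‖hatg g ξ2‖ ≤ ‖hatg g ξ1‖) (hα : 0 ≤ α)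
    (hσ : 0 < σ t) (hA : 0 ≤ A k t) (hkl : k ≠ l) (hη : |η - deriv (φ l) t| ≤ α / σ t)
    (hgap : 2 * α * |(l : ℝ) - k| ≤ |σ t * deriv (φ l) t - σ t * deriv (φ k) t|) :
    ‖toneSTFT A φ g σ k t η‖ ≤ A k t * ‖hatg g (α * (2 * |(l : ℝ) - k| - 1))‖ := by
  rw [norm_toneSTFT hA]
  refine mul_le_mul_of_nonneg_left ?_ hA
  refine norm_hatg_le_of_abs_le hgeven hgdec hα (one_le_abs_natCast_sub hkl)
    (u := σ t * (η - deriv (φ l) t)) ?_ ?_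
  · rwa [abs_mul, abs_of_pos hσ, ← le_div_iff₀' hσ]
  · rwa [show σ t * (η - deriv (φ k) t) - σ t * (η - deriv (φ l) t)
      = σ t * deriv (φ l) t - σ t * deriv (φ k) t by ring]

lemma errl_le {K : ℕ} {A : ℕ → ℝ → ℝ} {g σ : ℝ → ℝ} {α ε1 ε2 τ0 t : ℝ} {l : ℕ}
    (hgdec : ∀ ξ1 ξ2, 0 ≤ ξ1 → ξ1 ≤ ξ2 → ‖hatg g ξ2‖ ≤ ‖hatg g ξ1‖) (hα : 0 ≤ α)
    (hgα : ‖hatg g α‖ = τ0) (hA : ∀ k ≤ K, 0 ≤ A k t) (hl : l ≤ K) :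
    errl K A g σ α ε1 ε2 l t ≤ Msum K A t * lam0 g σ ε1 ε2 t + τ0 * (Msum K A t - A l t) := by
  have hlS : l ∈ Finset.range (K + 1) := Finset.mem_range_succ_iff.mpr hl
  rw [errl, Msum, ← Finset.add_sum_erase _ _ hlS, add_sub_cancel_left, mul_comm τ0,
    Finset.sum_mul]
  gcongr with k hk
  · exact hA k (Finset.mem_range_succ_iff.mp (Finset.mem_of_mem_erase hk))
  · rw [← hgα]
    exact hgdec α _ hα (by nlinarith [one_le_abs_natCast_sub (Finset.ne_of_mem_erase hk)])

lemma deriv_sub_deriv_pred_pos {K : ℕ} {φ : ℕ → ℝ → ℝ} (hφ0 : ∀ s, φ 0 s = 0)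
    (hφ'pos : ∀ k, 1 ≤ k → k ≤ K → ∃ c > 0, ∀ s, c ≤ deriv (φ k) s)
    (hfreq : ∃ d > 0, ∀ k, 2 ≤ k → k ≤ K → ∀ s, d ≤ deriv (φ k) s - deriv (φ (k - 1)) s)
    (t : ℝ) : ∀ k, 1 ≤ k → k ≤ K → 0 < deriv (φ k) t - deriv (φ (k - 1)) t := by
  intro k hk1 hkK
  rcases (by omega : k = 1 ∨ 2 ≤ k) with rfl | hk2
  · obtain ⟨c, hc, hcφ⟩ := hφ'pos 1 le_rfl hkK
    simpa [show φ 0 = fun _ => 0 from funext hφ0] using hc.trans_le (hcφ t)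
  · obtain ⟨d, hd, hdφ⟩ := hfreq
    exact hd.trans_le (hdφ k hk2 hkK t)

theorem thm2_1d_general (K : ℕ) (A φ : ℕ → ℝ → ℝ) (ε1 ε2 : ℝ) (x : ℝ → ℂ)
    (g : ℝ → ℝ) (σ : ℝ → ℝ) (τ0 α t epst : ℝ)
    (hε2 : 0 < ε2)
    (hAreg : ∀ k ≤ K, ContDiff ℝ 1 (A k))
    (hAbdd : ∀ k ≤ K, ∃ C, ∀ s, |A k s| ≤ C)
    (hφreg : ∀ k ≤ K, ContDiff ℝ 2 (φ k))
    (hφ0 : ∀ s, φ 0 s = 0)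
    (hApos : ∀ k ≤ K, ∀ s, 0 < A k s)
    (hφ'pos : ∀ k, 1 ≤ k → k ≤ K → ∃ c > 0, ∀ s, c ≤ deriv (φ k) s)
    (hfreq : ∃ d > 0, ∀ k, 2 ≤ k → k ≤ K → ∀ s, d ≤ deriv (φ k) s - deriv (φ (k - 1)) s)
    (hAlip : ∀ k ≤ K, ∀ s τ, |A k (s + τ) - A k s| ≤ ε1 * |τ| * A k s)
    (hφ'' : ∀ k, 1 ≤ k → k ≤ K → ∀ s, |deriv (deriv (φ k)) s| ≤ ε2)
    (hx : ∀ s, x s = ∑ k ∈ Finset.range (K + 1), xcomp A φ k s)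
    (hgint : Integrable g)
    (hgI1 : Integrable fun τ : ℝ => τ * g τ)
    (hgI2 : Integrable fun τ : ℝ => τ ^ 2 * g τ)
    (hgnorm : (∫ τ : ℝ, g τ) = 1)
    (hgeven : ∀ ξ, ‖hatg g (-ξ)‖ = ‖hatg g ξ‖)
    (hgdec : ∀ ξ1 ξ2, 0 ≤ ξ1 → ξ1 ≤ ξ2 → ‖hatg g ξ2‖ ≤ ‖hatg g ξ1‖)
    (hτ0 : 0 < τ0)
    (hα : 0 < α) (hgα : ‖hatg g α‖ = τ0)
    (hσ : ∀ s, 0 < σ s)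
    (hsep : ∀ s, ∀ k, 1 ≤ k → k ≤ K →
      2 * α / (deriv (φ k) s - deriv (φ (k - 1)) s) ≤ σ s)
    (heps2 : epst ≤ muMin K A t - Msum K A t * (τ0 + lam0 g σ ε1 ε2 t))
    (ηhat : ℕ → ℝ)
    (hηmem : ∀ l, 1 ≤ l → l ≤ K → ηhat l ∈ Gtk x g σ φ α t epst l)
    (hηmax : ∀ l, 1 ≤ l → l ≤ K → ∀ η ∈ Gtk x g σ φ α t epst l,
      ‖aSTFT x g σ t η‖ ≤ ‖aSTFT x g σ t (ηhat l)‖)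
    (hη0 : ηhat 0 = 0)
    :
    ∀ l ≤ K, |‖aSTFT x g σ t (ηhat l)‖ - A l t| ≤ errl K A g σ α ε1 ε2 l t := by
  intro l hl
  have hσt := hσ t
  have hlS : l ∈ Finset.range (K + 1) := Finset.mem_range_succ_iff.mpr hl
  have hφ0' : φ 0 = fun _ => 0 := funext hφ0
  have happrox := norm_aSTFT_sub_sum_toneSTFT_le hx (fun k hk => (hAreg k hk).continuous) hAbdd
    (fun k hk => (hApos k hk t).le) (fun k hk => hAlip k hk t) hφreg
    (fun k hk s => by
      rcases Nat.eq_zero_or_pos k with rfl | hk1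
      · simpa [hφ0'] using hε2.le
      · exact hφ'' k hk1 hk s) hgint hgI1 hgI2 hσt
  have hcross : ∀ η, |η - deriv (φ l) t| ≤ α / σ t → ∀ k ∈ (Finset.range (K + 1)).erase l,
      ‖toneSTFT A φ g σ k t η‖ ≤ A k t * ‖hatg g (α * (2 * |(l : ℝ) - k| - 1))‖ := by
    intro η hη k hk
    have hkK := Finset.mem_range_succ_iff.mp (Finset.mem_of_mem_erase hk)
    exact norm_toneSTFT_le_of_ne hgeven hgdec hα.le hσt (hApos k hkK t).le
      (Finset.ne_of_mem_erase hk) hη (two_mul_abs_sub_le_of_sep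
        (deriv_sub_deriv_pred_pos hφ0 hφ'pos hfreq t) (hsep t) hkK hl)
  have hupper : ∀ η, |η - deriv (φ l) t| ≤ α / σ t →
      ‖aSTFT x g σ t η‖ ≤ A l t + errl K A g σ α ε1 ε2 l t :=
    fun η hη => norm_le_of_norm_sub_sum_le hlS (happrox η)
      (norm_toneSTFT_le (hApos l hl t).le hgnorm hgeven hgdec η) (hcross η hη)
  have hlower : A l t - errl K A g σ α ε1 ε2 l t ≤ ‖aSTFT x g σ t (deriv (φ l) t)‖ :=
    le_norm_of_norm_sub_sum_le hlS (happrox _) (norm_toneSTFT_deriv (hApos l hl t).le hgnorm).ge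
      (hcross _ (by rw [sub_self, abs_zero]; positivity))
  rcases Nat.eq_zero_or_pos l with rfl | hl1
  · have hη : ηhat 0 = deriv (φ 0) t := by simp [hη0, hφ0']
    rw [hη]
    exact abs_le.2 ⟨by linarith, by linarith [hupper _ (by rw [sub_self, abs_zero]; positivity)]⟩
  · -- the argmax competes with `φ'_l(t)`, which lies in `𝓖_{t,l}` because `err_l < A_l - ε̃1`
    have hmem : deriv (φ l) t ∈ Gtk x g σ φ α t epst l := by
      refine ⟨?_, by rw [sub_self, abs_zero]; positivity⟩
      have herr := errl_le (σ := σ) (ε1 := ε1) (ε2 := ε2) hgdec hα.le hgα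
        (fun k hk => (hApos k hk t).le) hl
      have hμ : muMin K A t ≤ A l t := Finset.inf'_le _ hlS
      have := mul_pos hτ0 (hApos l hl t)
      show epst < _
      linarith
    exact abs_le.2
      ⟨by linarith [hηmax l hl1 hl _ hmem], by linarith [hupper _ (hηmem l hl1 hl).2.le]⟩

theorem thm2_1d (K : ℕ) (A φ : ℕ → ℝ → ℝ) (ε1 ε2 : ℝ) (x : ℝ → ℂ)
    (g : ℝ → ℝ) (σ : ℝ → ℝ) (τ0 α t epst : ℝ)
    (hε1 : 0 < ε1) (hε2 : 0 < ε2)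
    (hAreg : ∀ k ≤ K, ContDiff ℝ 1 (A k))
    (hAbdd : ∀ k ≤ K, ∃ C, ∀ s, |A k s| ≤ C)
    (hφreg : ∀ k ≤ K, ContDiff ℝ 2 (φ k))
    (hφ0 : ∀ s, φ 0 s = 0)
    (hApos : ∀ k ≤ K, ∀ s, 0 < A k s)
    (hφ'pos : ∀ k, 1 ≤ k → k ≤ K → ∃ c > 0, ∀ s, c ≤ deriv (φ k) s)
    (hφ'bdd : ∀ k, 1 ≤ k → k ≤ K → ∃ C, ∀ s, deriv (φ k) s ≤ C)
    (hfreq : ∃ d > 0, ∀ k, 2 ≤ k → k ≤ K → ∀ s, d ≤ deriv (φ k) s - deriv (φ (k - 1)) s)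
    (hAlip : ∀ k ≤ K, ∀ s τ, |A k (s + τ) - A k s| ≤ ε1 * |τ| * A k s)
    (hφ'' : ∀ k, 1 ≤ k → k ≤ K → ∀ s, |deriv (deriv (φ k)) s| ≤ ε2)
    (hx : ∀ s, x s = ∑ k ∈ Finset.range (K + 1), xcomp A φ k s)
    (hgint : Integrable g)
    (hgL2 : MemLp g 2 (volume : Measure ℝ))
    (hgI1 : Integrable fun τ : ℝ => τ * g τ)
    (hgI2 : Integrable fun τ : ℝ => τ ^ 2 * g τ)
    (hgnorm : (∫ τ : ℝ, g τ) = 1)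
    (hgeven : ∀ ξ, ‖hatg g (-ξ)‖ = ‖hatg g ξ‖)
    (hgdec : ∀ ξ1 ξ2, 0 ≤ ξ1 → ξ1 ≤ ξ2 → ‖hatg g ξ2‖ ≤ ‖hatg g ξ1‖)
    (hτ0 : 0 < τ0) (hτ0' : τ0 < 1)
    (hα : 0 < α) (hgα : ‖hatg g α‖ = τ0)
    (hσ : ∀ s, 0 < σ s)
    (hsep : ∀ s, ∀ k, 1 ≤ k → k ≤ K →
      2 * α / (deriv (φ k) s - deriv (φ (k - 1)) s) ≤ σ s)
    (hmain : 2 * Msum K A t * (τ0 + lam0 g σ ε1 ε2 t) ≤ muMin K A t)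
    (heps1 : Msum K A t * (τ0 + lam0 g σ ε1 ε2 t) ≤ epst)
    (heps2 : epst ≤ muMin K A t - Msum K A t * (τ0 + lam0 g σ ε1 ε2 t))
    (ηhat : ℕ → ℝ)
    (hηmem : ∀ l, 1 ≤ l → l ≤ K → ηhat l ∈ Gtk x g σ φ α t epst l)
    (hηmax : ∀ l, 1 ≤ l → l ≤ K → ∀ η ∈ Gtk x g σ φ α t epst l,
      ‖aSTFT x g σ t η‖ ≤ ‖aSTFT x g σ t (ηhat l)‖)
    (hη0 : ηhat 0 = 0)
    (hgpos : ∀ τ : ℝ, 0 ≤ g τ)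
    :
    ∀ l ≤ K, |‖aSTFT x g σ t (ηhat l)‖ - A l t| ≤ errl K A g σ α ε1 ε2 l t :=
  thm2_1d_general K A φ ε1 ε2 x g σ τ0 α t epst hε2 hAreg hAbdd hφreg hφ0 hApos hφ'pos hfreq hAlip
    hφ'' hx hgint hgI1 hgI2 hgnorm hgeven hgdec hτ0 hα hgα hσ hsep heps2 ηhat hηmem hηmax hη0
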